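/- In the direct simulation game, Duplicator has a winning strategy from (v, w) if and only if v is directly simulated by w in the coinductive sense: there exists a relation R with v R w such that whenever x R y, (i) Ω(x) = Ω(y), (ii) if x is owned by even then for every successor x' of x, player even can ensure a move from y into the R-image of x' (y →_even x'R), and (iii) if x is owned by odd then y →_even (post(x))R. -/
import Mathlib


universe u

/-- A parity game: a directed graph with a total edge relation, a priority
function and an owner function (`true` = player even, `false` = player odd). -/
structure ParityGame (V : Type u) where
  edge : V → V → Prop
  total : ∀ v, ∃ w, edge v w
  prio : V → ℕ
  owner : V → Bool

namespace ParityGame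

variable {V : Type u}

/-- A (history-dependent) strategy: given the history of previously visited
vertices and the current vertex, choose a successor.  Only the values at
vertices owned by the given player matter. -/
abbrev Strategy (V : Type u) : Type u := List V → V → V

variable (G : ParityGame V)

/-- A strategy is valid for player `i` if it always proposes edges. -/
def ValidStrategy (i : Bool) (σ : Strategy V) : Prop :=
  ∀ h v, G.owner v = i → G.edge v (σ h v)

/-- A memoryless strategy only depends on the current vertex. -/
def Memoryless (σ : Strategy V) : Prop := ∀ h h' v, σ h v = σ h' v

/-- An (infinite) play is an infinite path in the game graph. -/
def IsPlay (p : ℕ → V) : Prop := ∀ n, G.edge (p n) (p (n + 1))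

/-- The history of a play before position `n`. -/
def hist (p : ℕ → V) (n : ℕ) : List V := List.ofFn (fun k : Fin n => p k)

/-- A play is consistent with a strategy `σ` of player `i` if at every vertex
owned by `i` the play follows `σ`. -/
def Consistent (i : Bool) (σ : Strategy V) (p : ℕ → V) : Prop :=
  ∀ n, G.owner (p n) = i → p (n + 1) = σ (hist p n) (p n)

/-- `G.ForcesVia i σ v U T`: every play from `v` consistent with `σ` reaches
`T`, all earlier vertices lying in `U`. -/
def ForcesVia (i : Bool) (σ : Strategy V) (v : V) (U T : Set V) : Prop :=
  ∀ p : ℕ → V, G.IsPlay p → G.Consistent i σ p → p 0 = v →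
    ∃ n, p n ∈ T ∧ ∀ j < n, p j ∈ U

/-- `v ⇒_{i,U} T`: player `i` has a memoryless strategy forcing every
consistent play from `v` to reach `T` while staying in `U` beforehand. -/
def Forces (i : Bool) (v : V) (U T : Set V) : Prop :=
  ∃ σ : Strategy V, G.ValidStrategy i σ ∧ Memoryless σ ∧ G.ForcesVia i σ v U T

/-- Every play from `v` consistent with `σ` stays in `U` forever. -/
def DivergesVia (i : Bool) (σ : Strategy V) (v : V) (U : Set V) : Prop :=
  ∀ p : ℕ → V, G.IsPlay p → G.Consistent i σ p → p 0 = v → ∀ n, p n ∈ U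

/-- `v ⇒^ω_{i,U}`: player `i` has a memoryless strategy keeping all
consistent plays from `v` forever inside `U`. -/
def Diverges (i : Bool) (v : V) (U : Set V) : Prop :=
  ∃ σ : Strategy V, G.ValidStrategy i σ ∧ Memoryless σ ∧ G.DivergesVia i σ v U

/-- Priority `k` occurs infinitely often on the play `p`. -/
def InfOften (p : ℕ → V) (k : ℕ) : Prop := ∀ N, ∃ n, N ≤ n ∧ G.prio (p n) = k

/-- Player even wins a play iff the least priority occurring infinitely often
is even. -/
def EvenWinsPlay (p : ℕ → V) : Prop := Even (sInf {k | G.InfOften p k})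

/-- Player `i` wins the play `p`. -/
def WinsPlay (i : Bool) (p : ℕ → V) : Prop := G.EvenWinsPlay p ↔ i = true

/-- `σ` is a winning strategy for player `i` from `v`. -/
def WinningFrom (i : Bool) (σ : Strategy V) (v : V) : Prop :=
  ∀ p : ℕ → V, G.IsPlay p → G.Consistent i σ p → p 0 = v → G.WinsPlay i p

end ParityGame

namespace ParityGame

variable {V : Type u} (G : ParityGame V)

/-- `w →_even S`: player even can ensure that the move from `w` ends in `S`:
if `w` is even-owned some successor of `w` is in `S`; if `w` is odd-owned all
successors of `w` are in `S`. -/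
def stepEven (w : V) (S : Set V) : Prop :=
  if G.owner w = true then ∃ w', G.edge w w' ∧ w' ∈ S
  else ∀ w', G.edge w w' → w' ∈ S

/-- Coinductive direct simulation relations. -/
def IsDirectSim (R : V → V → Prop) : Prop :=
  ∀ v w, R v w →
    G.prio v = G.prio w ∧
    (G.owner v = true → ∀ v', G.edge v v' → G.stepEven w {w' | R v' w'}) ∧
    (G.owner v = false → G.stepEven w {w' | ∃ v', G.edge v v' ∧ R v' w'})

/-- The direct simulation preorder `v ≤_d w`. -/
def dsim (v w : V) : Prop := ∃ R, G.IsDirectSim R ∧ R v w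

end ParityGame

namespace ParityGame

variable {V : Type u} (G : ParityGame V)

/-- In a round of the simulation game played from position `(v,w)`, Spoiler
controls the first component iff `v` is even-owned and the second component
iff `w` is odd-owned (he moves first, and Duplicator responds).
A Duplicator strategy takes the history of positions, the current position and
Spoiler's proposal and returns the next position; it is valid if it always
proposes edges and respects Spoiler's choices on the components Spoiler
controls. -/
def DupValid (τ : List (V × V) → V × V → V × V → V × V) : Prop :=
  ∀ h v w s, (G.owner v = true → G.edge v s.1) → (G.owner w = false → G.edge w s.2) →
    G.edge v (τ h (v, w) s).1 ∧ G.edge w (τ h (v, w) s).2 ∧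
    (G.owner v = true → (τ h (v, w) s).1 = s.1) ∧
    (G.owner w = false → (τ h (v, w) s).2 = s.2)

/-- A play of the simulation game consistent with Duplicator's strategy `τ`:
each next position results from `τ` applied to some (edge-valid) Spoiler
proposal. -/
def ConsistentDup (τ : List (V × V) → V × V → V × V → V × V)
    (p : ℕ → V × V) : Prop :=
  ∀ n, ∃ s : V × V,
    (G.owner (p n).1 = true → G.edge (p n).1 s.1) ∧
    (G.owner (p n).2 = false → G.edge (p n).2 s.2) ∧
    p (n + 1) = τ (List.ofFn fun k : Fin n => p k) (p n) s

/-- Duplicator has a winning strategy from `(v,w)` in the direct simulation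
game: all consistent plays have equal priorities in every position. -/
def DupWinsDirect (v w : V) : Prop :=
  ∃ τ : List (V × V) → V × V → V × V → V × V, G.DupValid τ ∧
    ∀ p : ℕ → V × V, p 0 = (v, w) → G.ConsistentDup τ p →
      ∀ n, G.prio (p n).1 = G.prio (p n).2

end ParityGame

namespace ParityGame

variable {V : Type u} (G : ParityGame V)

noncomputable def succV (x : V) : V := Classical.choose (G.total x)

lemma succV_edge (x : V) : G.edge x (G.succV x) := Classical.choose_spec (G.total x)

lemma exists_good (R : V → V → Prop) (hR : G.IsDirectSim R) (v w : V) (s : V × V) :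
    ∃ q : V × V, (G.owner v = true → G.edge v s.1) → (G.owner w = false → G.edge w s.2) →
      G.edge v q.1 ∧ G.edge w q.2 ∧ (G.owner v = true → q.1 = s.1) ∧
      (G.owner w = false → q.2 = s.2) ∧ (R v w → R q.1 q.2) := by
  classical
  by_cases hR0 : R v w
  · obtain ⟨-, h2, h3⟩ := hR v w hR0
    by_cases hv : G.owner v = true
    · by_cases hs1 : G.edge v s.1
      · have hstep := h2 hv s.1 hs1
        by_cases hw : G.owner w = true
        · rw [stepEven, if_pos hw] at hstep
          obtain ⟨w', hw', hRw⟩ := hstep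
          exact ⟨(s.1, w'), fun _ _ => ⟨hs1, hw', fun _ => rfl,
            fun h => absurd h (by simp [hw]), fun _ => hRw⟩⟩
        · have hwf : G.owner w = false := by simpa using hw
          rw [stepEven, if_neg hw] at hstep
          by_cases hs2 : G.edge w s.2
          · exact ⟨(s.1, s.2), fun _ _ => ⟨hs1, hs2, fun _ => rfl, fun _ => rfl,
              fun _ => hstep s.2 hs2⟩⟩
          · exact ⟨(v, w), fun _ h2' => absurd (h2' hwf) hs2⟩
      · exact ⟨(v, w), fun h1 _ => absurd (h1 hv) hs1⟩
    · have hv' : G.owner v = false := by simpa using hv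
      have hstep := h3 hv'
      by_cases hw : G.owner w = true
      · rw [stepEven, if_pos hw] at hstep
        obtain ⟨w', hw'e, v', hv'e, hRw⟩ := hstep
        exact ⟨(v', w'), fun _ _ => ⟨hv'e, hw'e, fun h => absurd h hv,
          fun h => absurd h (by simp [hw]), fun _ => hRw⟩⟩
      · have hwf : G.owner w = false := by simpa using hw
        rw [stepEven, if_neg hw] at hstep
        by_cases hs2 : G.edge w s.2
        · obtain ⟨v', hv'e, hRw⟩ := hstep s.2 hs2
          exact ⟨(v', s.2), fun _ _ => ⟨hv'e, hs2, fun h => absurd h hv,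
            fun _ => rfl, fun _ => hRw⟩⟩
        · exact ⟨(v, w), fun _ h2' => absurd (h2' hwf) hs2⟩
  · refine ⟨(if G.owner v = true then s.1 else G.succV v,
      if G.owner w = false then s.2 else G.succV w), fun h1 h2 => ?_⟩
    refine ⟨?_, ?_, ?_, ?_, fun h => absurd h hR0⟩
    · dsimp only; split_ifs with h; exacts [h1 h, G.succV_edge v]
    · dsimp only; split_ifs with h; exacts [h2 h, G.succV_edge w]
    · intro h; simp [h]
    · intro h; simp [h]

noncomputable def tauOf (R : V → V → Prop) (hR : G.IsDirectSim R) :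
    List (V × V) → V × V → V × V → V × V :=
  fun _ p s => Classical.choose (G.exists_good R hR p.1 p.2 s)

lemma dsim_to_win {v w : V} (h : G.dsim v w) : G.DupWinsDirect v w := by
  obtain ⟨R, hR, hvw⟩ := h
  refine ⟨G.tauOf R hR, ?_, ?_⟩
  · intro h v w s h1 h2
    have hs := Classical.choose_spec (G.exists_good R hR v w s) h1 h2
    exact ⟨hs.1, hs.2.1, hs.2.2.1, hs.2.2.2.1⟩
  · intro p hp0 hcons n
    suffices hRn : ∀ n, R (p n).1 (p n).2 by exact (hR _ _ (hRn n)).1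
    intro n
    induction n with
    | zero => rw [hp0]; exact hvw
    | succ n ih =>
      obtain ⟨s, hs1, hs2, heq⟩ := hcons n
      rw [heq]
      exact (Classical.choose_spec (G.exists_good R hR (p n).1 (p n).2 s) hs1 hs2).2.2.2.2 ih

noncomputable def auxPlay (τ : List (V × V) → V × V → V × V → V × V) (q : V × V) :
    ℕ → List (V × V) × (V × V)
  | 0 => ([], q)
  | n + 1 =>
    let a := auxPlay τ q n
    (a.1 ++ [a.2], τ a.1 a.2 (G.succV a.2.1, G.succV a.2.2))

lemma auxPlay_hist (τ : List (V × V) → V × V → V × V → V × V) (q : V × V) (n : ℕ) :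
    (G.auxPlay τ q n).1 = List.ofFn (fun k : Fin n => (G.auxPlay τ q (k : ℕ)).2) := by
  induction n with
  | zero => simp [auxPlay]
  | succ n ih =>
    rw [List.ofFn_succ']
    simp [auxPlay, ih, List.concat_eq_append]

lemma exists_consistent (τ : List (V × V) → V × V → V × V → V × V) (q : V × V) :
    ∃ p : ℕ → V × V, p 0 = q ∧ G.ConsistentDup τ p := by
  refine ⟨fun n => (G.auxPlay τ q n).2, rfl, fun n => ?_⟩
  refine ⟨(G.succV (G.auxPlay τ q n).2.1, G.succV (G.auxPlay τ q n).2.2),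
    fun _ => G.succV_edge _, fun _ => G.succV_edge _, ?_⟩
  show (G.auxPlay τ q (n + 1)).2 = _
  rw [← G.auxPlay_hist]
  rfl

lemma dupWins_prio {x y : V} (h : G.DupWinsDirect x y) : G.prio x = G.prio y := by
  obtain ⟨τ, hv, hw⟩ := h
  obtain ⟨p, hp0, hc⟩ := G.exists_consistent τ (x, y)
  have h0 := hw p hp0 hc 0
  rwa [hp0] at h0

lemma dupWins_step (τ : List (V × V) → V × V → V × V → V × V) (x y : V)
    (hval : G.DupValid τ)
    (hwin : ∀ p : ℕ → V × V, p 0 = (x, y) → G.ConsistentDup τ p →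
      ∀ n, G.prio (p n).1 = G.prio (p n).2)
    (s : V × V) (hs1 : G.owner x = true → G.edge x s.1)
    (hs2 : G.owner y = false → G.edge y s.2) :
    G.DupWinsDirect (τ [] (x, y) s).1 (τ [] (x, y) s).2 := by
  refine ⟨fun h p s' => τ ((x, y) :: h) p s',
    fun h v w s' h1 h2 => hval _ v w s' h1 h2, ?_⟩
  intro p' hp'0 hc' n
  set p : ℕ → V × V := fun n => match n with | 0 => (x, y) | n + 1 => p' n with hp
  have hcons : G.ConsistentDup τ p := by
    intro m
    match m with
    | 0 =>
      refine ⟨s, hs1, hs2, ?_⟩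
      show p' 0 = τ (List.ofFn fun k : Fin 0 => p (k : ℕ)) (x, y) s
      rw [hp'0]
      simp
    | m + 1 =>
      obtain ⟨s', h1, h2, heq⟩ := hc' m
      refine ⟨s', h1, h2, ?_⟩
      show p' (m + 1) = τ (List.ofFn fun k : Fin (m + 1) => p (k : ℕ)) (p' m) s'
      rw [heq]
      show τ ((x, y) :: List.ofFn fun k : Fin m => p' (k : ℕ)) (p' m) s' = _
      congr 1
      rw [List.ofFn_succ]
      rfl
  exact hwin p rfl hcons (n + 1)

lemma win_to_dsim {v w : V} (h : G.DupWinsDirect v w) : G.dsim v w := by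
  refine ⟨fun x y => G.DupWinsDirect x y, ?_, h⟩
  intro x y hxy
  obtain ⟨τ, hval, hwin⟩ := hxy
  refine ⟨G.dupWins_prio ⟨τ, hval, hwin⟩, ?_, ?_⟩
  · intro hx x' hx'
    rw [stepEven]
    split_ifs with hy
    · have hq := G.dupWins_step τ x y hval hwin (x', x') (fun _ => hx')
        (fun h => absurd h (by simp [hy]))
      have hvq := hval [] x y (x', x') (fun _ => hx') (fun h => absurd h (by simp [hy]))
      have h1 := hvq.2.2.1 hx
      rw [h1] at hq
      exact ⟨(τ [] (x, y) (x', x')).2, hvq.2.1, hq⟩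
    · have hyf : G.owner y = false := by simpa using hy
      intro y' hy'
      have hq := G.dupWins_step τ x y hval hwin (x', y') (fun _ => hx') (fun _ => hy')
      have hvq := hval [] x y (x', y') (fun _ => hx') (fun _ => hy')
      have h1 := hvq.2.2.1 hx
      have h2 := hvq.2.2.2 hyf
      rw [h1, h2] at hq
      exact hq
  · intro hx
    rw [stepEven]
    have hx1 : G.owner x = true → G.edge x x := fun h => absurd h (by simp [hx])
    split_ifs with hy
    · have hq := G.dupWins_step τ x y hval hwin (x, y) hx1
        (fun h => absurd h (by simp [hy]))
      have hvq := hval [] x y (x, y) hx1 (fun h => absurd h (by simp [hy]))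
      exact ⟨_, hvq.2.1, _, hvq.1, hq⟩
    · have hyf : G.owner y = false := by simpa using hy
      intro y' hy'
      have hq := G.dupWins_step τ x y hval hwin (x, y') hx1 (fun _ => hy')
      have hvq := hval [] x y (x, y') hx1 (fun _ => hy')
      have h2 := hvq.2.2.2 hyf
      rw [h2] at hq
      exact ⟨_, hvq.1, hq⟩

end ParityGame

/-- Duplicator wins the direct simulation game from `(v, w)` iff `v` is
directly simulated by `w` in the coinductive sense. -/
theorem dupWinsDirect_iff_dsim {V : Type u} [Fintype V] (G : ParityGame V)
    (v w : V) :
    G.DupWinsDirect v w ↔ G.dsim v w := by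
  exact ⟨fun h => G.win_to_dsim h, fun h => G.dsim_to_win h⟩
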